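/- arXiv:1010.2475 — 2 statements merged into one kernel-verified Lean document; each statement's English description precedes it below -/
import Mathlib

section
/- For every λ > 0 and every b ∈ ℝ² \ {0}, the convolution identity ∫_{ℝ²} V₀₀(x + b; λ) φ₀₀(x; λ) dx = V₀₀(b; √2 λ) holds, i.e. the average of the Lamb–Oseen velocity field with core size λ against a Gaussian of core size λ equals the Lamb–Oseen velocity field with core size √2 λ evaluated at the displacement b. -/
open MeasureTheory Real

/-- first partial derivative `∂_{x₁}` of a function on `ℝ²`. -/
noncomputable def pd1 (f : ℝ × ℝ → ℝ) : ℝ × ℝ → ℝ := fun x => deriv (fun s => f (s, x.2)) x.1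

/-- second partial derivative `∂_{x₂}` of a function on `ℝ²`. -/
noncomputable def pd2 (f : ℝ × ℝ → ℝ) : ℝ × ℝ → ℝ := fun x => deriv (fun s => f (x.1, s)) x.2

/-- mixed partial derivative `∂^{k₁}_{x₁} ∂^{k₂}_{x₂}`. -/
noncomputable def md (k1 k2 : ℕ) (f : ℝ × ℝ → ℝ) : ℝ × ℝ → ℝ := pd1^[k1] (pd2^[k2] f)

/-- the Gaussian vorticity `φ₀₀(x;λ) = (1/(πλ²)) exp(−|x|²/λ²)`. -/
noncomputable def phi00 (lam : ℝ) (x : ℝ × ℝ) : ℝ :=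
  (1 / (π * lam ^ 2)) * Real.exp (-(x.1 ^ 2 + x.2 ^ 2) / lam ^ 2)

/-- first component of the Lamb–Oseen velocity field `V₀₀(x;λ)`. -/
noncomputable def V001 (lam : ℝ) (x : ℝ × ℝ) : ℝ :=
  (1 / (2 * π)) * (-x.2 / (x.1 ^ 2 + x.2 ^ 2)) * (1 - Real.exp (-(x.1 ^ 2 + x.2 ^ 2) / lam ^ 2))

/-- second component of the Lamb–Oseen velocity field `V₀₀(x;λ)`. -/
noncomputable def V002 (lam : ℝ) (x : ℝ × ℝ) : ℝ :=
  (1 / (2 * π)) * (x.1 / (x.1 ^ 2 + x.2 ^ 2)) * (1 - Real.exp (-(x.1 ^ 2 + x.2 ^ 2) / lam ^ 2))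

/-- two-dimensional Hermite polynomial `H_{n₁,n₂}(z;λ)` defined via the generating function. -/
noncomputable def hpoly (lam : ℝ) (n1 n2 : ℕ) (z : ℝ × ℝ) : ℝ :=
  md n1 n2 (fun τ => Real.exp ((2 * (τ.1 * z.1 + τ.2 * z.2) - (τ.1 ^ 2 + τ.2 ^ 2)) / lam ^ 2)) (0, 0)

/-- Hermite function `φ_{k₁,k₂}(x;λ) = ∂^{k₁}_{x₁} ∂^{k₂}_{x₂} φ₀₀(x;λ)`. -/
noncomputable def hfun (lam : ℝ) (k1 k2 : ℕ) : ℝ × ℝ → ℝ := md k1 k2 (phi00 lam)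

/-! With `a = λ⁻²`, the kernel `(1 - e^{-a|y|²}) / |y|²` equals `∫₀^a e^{-t|y|²} dt`. After
Fubini, each `t`-slice is a Gaussian integral in `x` that factors over the two coordinates and is
evaluated by completing the square, giving `π a b₂ (a + t)⁻² e^{-a t |b|² / (a + t)}`. The
substitution `u = a t / (a + t)` maps `[0, a]` onto `[0, a / 2]` and turns the `t`-integral back
into `(1 - e^{-a|b|²/2}) / |b|²`, the kernel of core size `√2 λ`. The second component reduces to
the first by swapping the coordinates. -/

open Set

lemma integral_exp_neg_mul_add_sq (k c : ℝ) :
    ∫ x : ℝ, exp (-(k * (x + c) ^ 2)) = √(π / k) := by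
  simpa only [neg_mul] using
    (integral_add_right_eq_self (fun y : ℝ => exp (-k * y ^ 2)) c).trans (integral_gaussian k)

lemma integral_add_mul_exp_neg_mul_add_sq (k c : ℝ) :
    ∫ x : ℝ, (x + c) * exp (-(k * (x + c) ^ 2)) = 0 := by
  let f : ℝ → ℝ := fun y => y * exp (-(k * y ^ 2))
  have hodd : ∫ y, f y = -∫ y, f y := by
    conv_lhs => rw [← integral_neg_eq_self]
    simp only [f, neg_sq, neg_mul, integral_neg]
  exact (integral_add_right_eq_self f c).trans (by linarith)

lemma integrable_exp_neg_mul_add_sq {k : ℝ} (hk : 0 < k) (c : ℝ) :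
    Integrable (fun x : ℝ => exp (-(k * (x + c) ^ 2))) := by
  simpa only [neg_mul] using (integrable_exp_neg_mul_sq hk).comp_add_right c

lemma integrable_add_mul_exp_neg_mul_add_sq {k : ℝ} (hk : 0 < k) (c : ℝ) :
    Integrable (fun x : ℝ => (x + c) * exp (-(k * (x + c) ^ 2))) := by
  simpa only [neg_mul] using (integrable_mul_exp_neg_mul_sq hk).comp_add_right c

section CompleteSquare

variable {a t : ℝ}

lemma exp_neg_mul_add_sq_add_mul_sq (hat : a + t ≠ 0) (β x : ℝ) :
    exp (-(t * (x + β) ^ 2 + a * x ^ 2)) =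
      exp (-(a * t / (a + t) * β ^ 2)) * exp (-((a + t) * (x + t * β / (a + t)) ^ 2)) := by
  rw [← exp_add]
  congr 1
  field_simp
  ring

lemma integral_exp_neg_mul_add_sq_add_mul_sq (hat : 0 < a + t) (β : ℝ) :
    ∫ x : ℝ, exp (-(t * (x + β) ^ 2 + a * x ^ 2)) =
      √(π / (a + t)) * exp (-(a * t / (a + t) * β ^ 2)) := by
  simp_rw [exp_neg_mul_add_sq_add_mul_sq hat.ne']
  rw [integral_const_mul, integral_exp_neg_mul_add_sq, mul_comm]

lemma integral_add_mul_exp_neg_mul_add_sq_add_mul_sq (hat : 0 < a + t) (β : ℝ) :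
    ∫ x : ℝ, (x + β) * exp (-(t * (x + β) ^ 2 + a * x ^ 2)) =
      a * β / (a + t) * (√(π / (a + t)) * exp (-(a * t / (a + t) * β ^ 2))) := by
  set c := t * β / (a + t)
  set K := exp (-(a * t / (a + t) * β ^ 2))
  have hsplit : ∀ x : ℝ, (x + β) * exp (-(t * (x + β) ^ 2 + a * x ^ 2)) =
      K * ((x + c) * exp (-((a + t) * (x + c) ^ 2))) +
        K * (a * β / (a + t)) * exp (-((a + t) * (x + c) ^ 2)) := by
    intro x
    have hβ : x + β = (x + c) + a * β / (a + t) := by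
      simp only [c]; field_simp; ring
    rw [exp_neg_mul_add_sq_add_mul_sq hat.ne', hβ]
    ring
  simp_rw [hsplit]
  rw [integral_add ((integrable_add_mul_exp_neg_mul_add_sq hat c).const_mul K)
      ((integrable_exp_neg_mul_add_sq hat c).const_mul _),
    integral_const_mul, integral_const_mul, integral_add_mul_exp_neg_mul_add_sq,
    integral_exp_neg_mul_add_sq]
  ring

end CompleteSquare

lemma integral_snd_add_mul_exp_neg {a t : ℝ} (hat : 0 < a + t) (b : ℝ × ℝ) :
    ∫ x : ℝ × ℝ, (x.2 + b.2) *
        exp (-(t * ((x.1 + b.1) ^ 2 + (x.2 + b.2) ^ 2) + a * (x.1 ^ 2 + x.2 ^ 2))) =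
      π * a * b.2 / (a + t) ^ 2 * exp (-(a * t / (a + t) * (b.1 ^ 2 + b.2 ^ 2))) := by
  have hsplit : ∀ x : ℝ × ℝ, (x.2 + b.2) *
      exp (-(t * ((x.1 + b.1) ^ 2 + (x.2 + b.2) ^ 2) + a * (x.1 ^ 2 + x.2 ^ 2))) =
        exp (-(t * (x.1 + b.1) ^ 2 + a * x.1 ^ 2)) *
          ((x.2 + b.2) * exp (-(t * (x.2 + b.2) ^ 2 + a * x.2 ^ 2))) := by
    intro x
    rw [mul_left_comm, ← exp_add]
    ring_nf
  have hsqrt : √(π / (a + t)) * √(π / (a + t)) = π / (a + t) := mul_self_sqrt (by positivity)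
  simp_rw [hsplit]
  rw [Measure.volume_eq_prod,
    integral_prod_mul (fun u : ℝ => exp (-(t * (u + b.1) ^ 2 + a * u ^ 2)))
      (fun v : ℝ => (v + b.2) * exp (-(t * (v + b.2) ^ 2 + a * v ^ 2))),
    integral_exp_neg_mul_add_sq_add_mul_sq hat, integral_add_mul_exp_neg_mul_add_sq_add_mul_sq hat,
    mul_add, neg_add, exp_add]
  linear_combination (norm := skip) a * b.2 / (a + t) * exp (-(a * t / (a + t) * b.1 ^ 2)) *
    exp (-(a * t / (a + t) * b.2 ^ 2)) * hsqrt
  field_simp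
  ring

lemma intervalIntegral_exp_neg_mul {s : ℝ} (hs : s ≠ 0) (c : ℝ) :
    ∫ u in (0 : ℝ)..c, exp (-(u * s)) = (1 - exp (-(c * s))) / s := by
  have := intervalIntegral.integral_comp_mul_right exp (neg_ne_zero.mpr hs) (a := 0) (b := c)
  simp only [mul_neg, zero_mul, neg_zero, integral_exp, exp_zero, smul_eq_mul] at this
  rw [this]
  field_simp
  ring

lemma intervalIntegral_exp_neg_div_add {a r : ℝ} (ha : 0 < a) (hr : r ≠ 0) :
    ∫ t in (0 : ℝ)..a, exp (-(a * t / (a + t) * r)) * (a ^ 2 / (a + t) ^ 2) =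
      (1 - exp (-(a * r / 2))) / r := by
  have hpos : ∀ t ∈ uIcc 0 a, a + t ≠ 0 := fun t ht => by
    rw [uIcc_of_le ha.le] at ht
    linarith [ht.1]
  have hderiv : ∀ t ∈ uIcc 0 a,
      HasDerivAt (fun t : ℝ => a * t / (a + t)) (a ^ 2 / (a + t) ^ 2) t := fun t ht => by
    refine (((hasDerivAt_id' t).const_mul a).div ((hasDerivAt_id' t).const_add a)
      (hpos t ht)).congr_deriv ?_
    ring
  have hcont : ContinuousOn (fun t : ℝ => a ^ 2 / (a + t) ^ 2) (uIcc 0 a) :=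
    continuousOn_const.div (by fun_prop) fun t ht => pow_ne_zero 2 (hpos t ht)
  have := intervalIntegral.integral_comp_mul_deriv hderiv hcont
    (g := fun u => exp (-(u * r))) (by fun_prop)
  simp only [Function.comp_def, mul_zero, zero_div] at this
  rw [this, show a * a / (a + a) = a / 2 by field_simp; ring, intervalIntegral_exp_neg_mul hr]
  ring_nf

lemma integrable_snd_add_mul_exp_neg_prod {a : ℝ} (ha : 0 < a) (b : ℝ × ℝ) :
    Integrable (fun z : (ℝ × ℝ) × ℝ => (z.1.2 + b.2) *
      exp (-(z.2 * ((z.1.1 + b.1) ^ 2 + (z.1.2 + b.2) ^ 2) + a * (z.1.1 ^ 2 + z.1.2 ^ 2))))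
      ((volume : Measure (ℝ × ℝ)).prod (volume.restrict (Ioc 0 a))) := by
  have h1 : Integrable (fun y : ℝ => exp (-(a * y ^ 2))) := by
    simpa using integrable_exp_neg_mul_add_sq ha 0
  have h2 : Integrable (fun y : ℝ => (|y| + |b.2|) * exp (-(a * y ^ 2))) := by
    simpa [add_mul, abs_mul, neg_mul, Pi.add_def] using
      (integrable_mul_exp_neg_mul_sq ha).abs.add (h1.const_mul |b.2|)
  have hbound : Integrable (fun x : ℝ × ℝ =>
      (|x.2| + |b.2|) * (exp (-(a * x.1 ^ 2)) * exp (-(a * x.2 ^ 2)))) := by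
    rw [Measure.volume_eq_prod]
    simpa only [mul_left_comm] using h1.mul_prod h2
  refine (hbound.comp_fst _).mono' (by fun_prop : Continuous _).aestronglyMeasurable ?_
  filter_upwards [Measure.quasiMeasurePreserving_snd.ae (ae_restrict_mem measurableSet_Ioc)]
    with z ht
  have hexp : exp (-(z.2 * ((z.1.1 + b.1) ^ 2 + (z.1.2 + b.2) ^ 2) + a * (z.1.1 ^ 2 + z.1.2 ^ 2)))
      ≤ exp (-(a * z.1.1 ^ 2)) * exp (-(a * z.1.2 ^ 2)) := by
    rw [← exp_add, exp_le_exp]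
    nlinarith [mul_nonneg ht.1.le (add_nonneg (sq_nonneg (z.1.1 + b.1)) (sq_nonneg (z.1.2 + b.2)))]
  rw [norm_mul, norm_of_nonneg (exp_pos _).le, norm_eq_abs]
  exact mul_le_mul (abs_add_le _ _) hexp (exp_pos _).le (by positivity)

lemma sq_add_sq_ne_zero {p : ℝ × ℝ} (hp : p ≠ 0) : p.1 ^ 2 + p.2 ^ 2 ≠ 0 := by
  contrapose! hp
  obtain ⟨h1, h2⟩ := (add_eq_zero_iff_of_nonneg (sq_nonneg _) (sq_nonneg _)).mp hp
  exact Prod.ext (pow_eq_zero_iff two_ne_zero |>.mp h1) (pow_eq_zero_iff two_ne_zero |>.mp h2)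

lemma one_sub_exp_neg_mul_div_eq_integral {s : ℝ} (hs : s ≠ 0) {a : ℝ} (ha : 0 ≤ a) :
    (1 - exp (-(a * s))) / s = ∫ t in Ioc 0 a, exp (-(t * s)) := by
  rw [← intervalIntegral.integral_of_le ha, intervalIntegral_exp_neg_mul hs]

lemma integral_snd_add_mul_one_sub_exp_div {a : ℝ} (ha : 0 < a) {b : ℝ × ℝ} (hb : b ≠ 0) :
    ∫ x : ℝ × ℝ, (x.2 + b.2) * ((1 - exp (-(a * ((x.1 + b.1) ^ 2 + (x.2 + b.2) ^ 2)))) /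
        ((x.1 + b.1) ^ 2 + (x.2 + b.2) ^ 2)) * exp (-(a * (x.1 ^ 2 + x.2 ^ 2))) =
      π * b.2 / a * ((1 - exp (-(a / 2 * (b.1 ^ 2 + b.2 ^ 2)))) / (b.1 ^ 2 + b.2 ^ 2)) := by
  set F : ℝ × ℝ → ℝ → ℝ := fun x t => (x.2 + b.2) *
    exp (-(t * ((x.1 + b.1) ^ 2 + (x.2 + b.2) ^ 2) + a * (x.1 ^ 2 + x.2 ^ 2)))
  have hslice : ∀ᵐ x : ℝ × ℝ,
      (x.2 + b.2) * ((1 - exp (-(a * ((x.1 + b.1) ^ 2 + (x.2 + b.2) ^ 2)))) /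
        ((x.1 + b.1) ^ 2 + (x.2 + b.2) ^ 2)) * exp (-(a * (x.1 ^ 2 + x.2 ^ 2))) =
      ∫ t in Ioc 0 a, F x t := by
    filter_upwards [volume.ae_ne (-b)] with x hx
    have hS := sq_add_sq_ne_zero (p := x + b) fun h => hx (add_eq_zero_iff_eq_neg.mp h)
    simp only [Prod.fst_add, Prod.snd_add] at hS
    simp only [F, neg_add, exp_add]
    rw [one_sub_exp_neg_mul_div_eq_integral hS ha.le, ← integral_const_mul, ← integral_mul_const]
    simp only [mul_assoc]
  have htime : ∀ t ∈ Ioc 0 a, ∫ x, F x t =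
      π * b.2 / a * (exp (-(a * t / (a + t) * (b.1 ^ 2 + b.2 ^ 2))) * (a ^ 2 / (a + t) ^ 2)) := by
    intro t ht
    have hat : 0 < a + t := by linarith [ht.1]
    rw [integral_snd_add_mul_exp_neg hat]
    field_simp
  rw [integral_congr_ae hslice, integral_integral_swap (integrable_snd_add_mul_exp_neg_prod ha b),
    setIntegral_congr_fun measurableSet_Ioc htime, integral_const_mul,
    ← intervalIntegral.integral_of_le ha.le,
    intervalIntegral_exp_neg_div_add ha (sq_add_sq_ne_zero hb)]
  ring_nf

lemma V001_add_mul_phi00 (lam : ℝ) (b x : ℝ × ℝ) :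
    V001 lam (x + b) * phi00 lam x = -(1 / (2 * π ^ 2 * lam ^ 2)) *
      ((x.2 + b.2) * ((1 - exp (-((lam ^ 2)⁻¹ * ((x.1 + b.1) ^ 2 + (x.2 + b.2) ^ 2)))) /
        ((x.1 + b.1) ^ 2 + (x.2 + b.2) ^ 2)) * exp (-((lam ^ 2)⁻¹ * (x.1 ^ 2 + x.2 ^ 2)))) := by
  simp only [V001, phi00, Prod.fst_add, Prod.snd_add, neg_div _ (_ ^ 2 + _),
    div_eq_inv_mul _ (lam ^ 2)]
  ring

lemma integral_V001_add_mul_phi00 {lam : ℝ} (hlam : 0 < lam) {b : ℝ × ℝ} (hb : b ≠ 0) :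
    ∫ x : ℝ × ℝ, V001 lam (x + b) * phi00 lam x = V001 (√2 * lam) b := by
  simp_rw [V001_add_mul_phi00]
  rw [integral_const_mul, integral_snd_add_mul_one_sub_exp_div (by positivity) hb]
  simp only [V001, mul_pow, sq_sqrt zero_le_two]
  field_simp

lemma V002_swap (lam : ℝ) (p : ℝ × ℝ) : V002 lam p.swap = -V001 lam p := by
  simp only [V002, V001, Prod.fst_swap, Prod.snd_swap, add_comm (p.2 ^ 2)]
  ring

lemma phi00_swap (lam : ℝ) (p : ℝ × ℝ) : phi00 lam p.swap = phi00 lam p := by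
  simp only [phi00, Prod.fst_swap, Prod.snd_swap, add_comm (p.2 ^ 2)]

lemma integral_V002_add_mul_phi00 (lam : ℝ) (b : ℝ × ℝ) :
    ∫ x : ℝ × ℝ, V002 lam (x + b) * phi00 lam x =
      -∫ x : ℝ × ℝ, V001 lam (x + b.swap) * phi00 lam x := by
  rw [← integral_neg, Measure.volume_eq_prod, ← integral_prod_swap]
  congr 1 with x
  rw [← phi00_swap lam x, ← Prod.swap_swap b, ← Prod.swap_add, V002_swap, Prod.swap_swap, neg_mul]

/-- averaging the Lamb–Oseen velocity field of core size λ against a Gaussian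
of core size λ gives the Lamb–Oseen velocity field of core size √2·λ. -/
theorem velocity_gaussian_convolution (lam : ℝ) (hlam : 0 < lam) (b : ℝ × ℝ) (hb : b ≠ 0) :
    (∫ x : ℝ × ℝ, V001 lam (x + b) * phi00 lam x) = V001 (Real.sqrt 2 * lam) b ∧
    (∫ x : ℝ × ℝ, V002 lam (x + b) * phi00 lam x) = V002 (Real.sqrt 2 * lam) b := by
  have hb' : b.swap ≠ 0 := by simpa [Prod.swap_eq_iff_eq_swap] using hb
  refine ⟨integral_V001_add_mul_phi00 hlam hb, ?_⟩
  rw [integral_V002_add_mul_phi00, integral_V001_add_mul_phi00 hlam hb', ← V002_swap,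
    Prod.swap_swap]
end

section
/- Let λ > 0 and let G₁(b) = (−b₂/(2π|b|²))(1 − e^{−|b|²/(2λ²)}) for b ∈ ℝ² \ {0}, extended smoothly by 0 at b = 0. Then for all nonnegative integers α₁, α₂, the mixed derivative ∂^{α₁}_{b₁} ∂^{α₂}_{b₂} G₁(b) evaluated at b = 0 equals (−1/(2π)) (1/(2λ²))^{(α₁+α₂+1)/2} ((−1)^{(α₁+α₂−1)/2}/((α₁+α₂+1)/2)!) C((α₁+α₂−1)/2, α₁/2) (α₁!)(α₂!) when α₁ is even and α₂ is odd, and equals 0 otherwise. -/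
open MeasureTheory Real

/-- first component of , extended by 0 at the origin. -/
noncomputable def G1 (lam : ℝ) (b : ℝ × ℝ) : ℝ :=
  if b = 0 then 0
  else (-b.2 / (2 * π * (b.1 ^ 2 + b.2 ^ 2)))
    * (1 - Real.exp (-(b.1 ^ 2 + b.2 ^ 2) / (2 * lam ^ 2)))

/-! With `c = 1/(2λ²)` and `r = b₁² + b₂²` we have
`G₁(b) = b₂ (e^{-cr} - 1)/(2πr) = b₂ ∑ₘ (-c)^{m+1} r^m / (2π (m+1)!)`, an entire series in `r`.
Expanding `r^m` binomially turns it into an absolutely convergent double power series in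
`(b₁, b₂)` whose only nonzero coefficients are those of `b₁^{2j} b₂^{2l+1}`, namely
`(-c)^{j+l+1} C(j+l, j) / (2π (j+l+1)!)`. The mixed derivative `∂^{α₁}_{b₁} ∂^{α₂}_{b₂}` at the
origin is `α₁! α₂!` times the coefficient of `b₁^{α₁} b₂^{α₂}`, computed one variable at a time. -/

open FormalMultilinearSeries Finset Nat

lemma hasFPowerSeriesOnBall_ofScalars_of_hasSum {d : ℕ → ℝ} {f : ℝ → ℝ}
    (h : ∀ x, HasSum (fun n => d n * x ^ n) (f x)) :
    HasFPowerSeriesOnBall f (ofScalars ℝ d) 0 ⊤ := by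
  have hterm : ∀ x : ℝ, (fun n => ofScalars ℝ d n (fun _ => x)) = fun n => d n * x ^ n := by
    intro x
    funext n
    rw [ofScalars_apply_eq, smul_eq_mul]
  refine ⟨?_, by simp, fun {y} _ => by simpa only [zero_add, hterm] using h y⟩
  refine le_of_eq (radius_eq_top_of_summable_norm _ fun r => ?_).symm
  simpa only [ofScalars_norm, Real.norm_eq_abs, abs_mul, abs_pow, NNReal.abs_eq] using
    (h r).summable.abs

lemma iteratedDeriv_zero_eq_of_hasSum {d : ℕ → ℝ} {f : ℝ → ℝ}
    (h : ∀ x, HasSum (fun n => d n * x ^ n) (f x)) (k : ℕ) :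
    iteratedDeriv k f 0 = k ! * d k := by
  have hk := (hasFPowerSeriesOnBall_ofScalars_of_hasSum h).factorial_smul 1 k
  rw [ofScalars_apply_eq] at hk
  rw [iteratedDeriv_eq_iteratedFDeriv, ← hk]
  simp

lemma iterate_pd1_apply (k : ℕ) (f : ℝ × ℝ → ℝ) (x : ℝ × ℝ) :
    pd1^[k] f x = iteratedDeriv k (fun s => f (s, x.2)) x.1 := by
  induction k generalizing f with
  | zero => simp
  | succ k ih => rw [Function.iterate_succ_apply, ih, iteratedDeriv_succ']; rfl

lemma iterate_pd2_apply (k : ℕ) (f : ℝ × ℝ → ℝ) (x : ℝ × ℝ) :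
    pd2^[k] f x = iteratedDeriv k (fun t => f (x.1, t)) x.2 := by
  induction k generalizing f with
  | zero => simp
  | succ k ih => rw [Function.iterate_succ_apply, ih, iteratedDeriv_succ']; rfl

lemma md_apply_zero (a1 a2 : ℕ) (f : ℝ × ℝ → ℝ) :
    md a1 a2 f 0 = iteratedDeriv a1 (fun s => iteratedDeriv a2 (fun t => f (s, t)) 0) 0 := by
  simp only [md, iterate_pd1_apply, iterate_pd2_apply]
  rfl

lemma md_zero_eq_of_hasSum {c : ℕ → ℕ → ℝ} {F : ℝ × ℝ → ℝ}
    (h : ∀ s t, HasSum (fun p : ℕ × ℕ => c p.1 p.2 * s ^ p.1 * t ^ p.2) (F (s, t)))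
    (a1 a2 : ℕ) : md a1 a2 F 0 = a1 ! * a2 ! * c a1 a2 := by
  have hswap : ∀ s t, HasSum (fun p : ℕ × ℕ => c p.2 p.1 * s ^ p.2 * t ^ p.1) (F (s, t)) :=
    fun s t => (Equiv.prodComm ℕ ℕ).hasSum_iff.mpr (h s t)
  have hcoeff : ∀ n s, HasSum (fun m => c m n * s ^ m) (∑' m, c m n * s ^ m) := fun n s => by
    simpa using ((hswap s 1).summable.prod_factor n).hasSum
  have hinner : ∀ s t, HasSum (fun n => (∑' m, c m n * s ^ m) * t ^ n) (F (s, t)) :=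
    fun s t => (hswap s t).prod_fiberwise fun n => (hcoeff n s).mul_right (t ^ n)
  rw [md_apply_zero]
  simp_rw [iteratedDeriv_zero_eq_of_hasSum (hinner _)]
  rw [iteratedDeriv_zero_eq_of_hasSum (d := fun m => a2 ! * c m a2)
    fun s => by simpa only [mul_assoc] using (hcoeff a2 s).mul_left (a2 ! : ℝ)]
  ring

lemma sum_antidiagonal_choose_mul_pow_mul_pow (b : ℕ → ℝ) (x y : ℝ) (n : ℕ) :
    ∑ p ∈ antidiagonal n, b (p.1 + p.2) * (p.1 + p.2).choose p.1 * x ^ p.1 * y ^ p.2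
      = b n * (x + y) ^ n := by
  rw [(Commute.all x y).add_pow', Finset.mul_sum]
  refine Finset.sum_congr rfl fun p hp => ?_
  rw [mem_antidiagonal.mp hp, nsmul_eq_mul]
  ring

lemma hasSum_choose_mul_pow_mul_pow {a : ℕ → ℝ} {x y S : ℝ}
    (h : HasSum (fun m => a m * (x + y) ^ m) S)
    (habs : Summable fun m => a m * (|x| + |y|) ^ m) :
    HasSum (fun p : ℕ × ℕ => a (p.1 + p.2) * (p.1 + p.2).choose p.1 * x ^ p.1 * y ^ p.2) S := by
  set f : ℕ × ℕ → ℝ := fun p => a (p.1 + p.2) * (p.1 + p.2).choose p.1 * x ^ p.1 * y ^ p.2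
  have hsum : Summable f := by
    refine Summable.of_abs (HasAntidiagonal.sigmaAntidiagonalEquivProd.summable_iff.mp ?_)
    refine (summable_sigma_of_nonneg fun _ => abs_nonneg _).mpr
      ⟨fun n => (hasSum_fintype _).summable, habs.abs.congr fun n => ?_⟩
    change _ = ∑' q : antidiagonal n, |f q|
    rw [tsum_fintype, Finset.sum_coe_sort _ (fun p => |f p|), abs_mul,
      abs_of_nonneg (by positivity : (0 : ℝ) ≤ (|x| + |y|) ^ n), ← sum_antidiagonal_choose_mul_pow_mul_pow (fun m => |a m|)]
    refine Finset.sum_congr rfl fun p _ => ?_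
    simp [f, abs_mul, abs_pow]
  have hgrouped : HasSum (fun m => a m * (x + y) ^ m) (∑' p, f p) :=
    ((HasAntidiagonal.sigmaAntidiagonalEquivProd.hasSum_iff.mpr hsum.hasSum).sigma
      fun n => hasSum_fintype _).congr_fun fun n => by
        rw [← sum_antidiagonal_choose_mul_pow_mul_pow, ← Finset.sum_coe_sort]
        rfl
  rw [h.unique hgrouped]
  exact hsum.hasSum

lemma hasSum_pow_succ_div_factorial (x : ℝ) :
    HasSum (fun m : ℕ => x ^ (m + 1) / (m + 1)!) (exp x - 1) := by
  have h := (hasSum_nat_add_iff' 1).mpr (NormedSpace.expSeries_div_hasSum_exp x)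
  simpa [← Real.exp_eq_exp_ℝ] using h

lemma hasSum_exp_neg_mul_sub_one_div (c : ℝ) {r : ℝ} (hr : r ≠ 0) :
    HasSum (fun m : ℕ => (-c) ^ (m + 1) / (m + 1)! * r ^ m) ((exp (-(c * r)) - 1) / r) := by
  refine ((hasSum_pow_succ_div_factorial (-(c * r))).div_const r).congr_fun fun m => ?_
  rw [neg_mul_eq_neg_mul, mul_pow, pow_succ r]
  field_simp

noncomputable def G1Coeff (c : ℝ) (m n : ℕ) : ℝ :=
  if Even m ∧ Odd n then
    (-c) ^ (m / 2 + n / 2 + 1) / (2 * π * (m / 2 + n / 2 + 1)!) * (m / 2 + n / 2).choose (m / 2)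
  else 0

lemma G1_eq_mul (lam s t : ℝ) :
    G1 lam (s, t) = t * ((exp (-(1 / (2 * lam ^ 2) * (s ^ 2 + t ^ 2))) - 1)
      / (s ^ 2 + t ^ 2) / (2 * π)) := by
  by_cases h : ((s, t) : ℝ × ℝ) = 0
  · simp [G1, (Prod.mk_eq_zero.mp h).2]
  · rw [G1, if_neg h]
    field_simp
    ring_nf

lemma hasSum_G1 (lam s t : ℝ) :
    HasSum (fun p : ℕ × ℕ => G1Coeff (1 / (2 * lam ^ 2)) p.1 p.2 * s ^ p.1 * t ^ p.2)
      (G1 lam (s, t)) := by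
  set c := 1 / (2 * lam ^ 2)
  rcases eq_or_ne t 0 with rfl | ht
  · convert hasSum_zero with p
    · rcases Nat.eq_zero_or_pos p.2 with h | h
      · simp [G1Coeff, h]
      · simp [h.ne']
    · simp [G1_eq_mul]
  have hr : s ^ 2 + t ^ 2 ≠ 0 := by positivity
  have hseries := (hasSum_exp_neg_mul_sub_one_div c hr).div_const (2 * π)
  have hgroup := (hasSum_choose_mul_pow_mul_pow (a := fun m => (-c) ^ (m + 1) / (m + 1)! / (2 * π))
    (x := s ^ 2) (y := t ^ 2) (by simpa only [mul_div_right_comm] using hseries) (by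
      simpa only [abs_pow, sq_abs, mul_div_right_comm] using hseries.summable)).mul_left t
  rw [G1_eq_mul]
  have hinj : Function.Injective fun p : ℕ × ℕ => (2 * p.1, 2 * p.2 + 1) := by
    intro p q h
    simp only [Prod.mk.injEq] at h
    ext <;> omega
  refine (hinj.hasSum_iff ?_).mp ?_
  · rintro ⟨m, n⟩ hmn
    rw [G1Coeff, if_neg, zero_mul, zero_mul]
    rintro ⟨⟨j, rfl⟩, ⟨l, rfl⟩⟩
    exact hmn ⟨(j, l), by simp [two_mul]⟩
  · refine hgroup.congr_fun fun ⟨j, l⟩ => ?_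
    simp only [Function.comp_apply, G1Coeff]
    rw [if_pos ⟨even_two_mul j, odd_two_mul_add_one l⟩, show 2 * j / 2 = j by omega,
      show (2 * l + 1) / 2 = l by omega]
    ring

theorem H1_derivative_formula_general (lam : ℝ) (a1 a2 : ℕ) :
    md a1 a2 (G1 lam) 0
      = if Even a1 ∧ Odd a2 then
          (-1 / (2 * π)) * (1 / (2 * lam ^ 2)) ^ ((a1 + a2 + 1) / 2)
            * ((-1 : ℝ) ^ ((a1 + a2 - 1) / 2) / (Nat.factorial ((a1 + a2 + 1) / 2) : ℝ))
            * (Nat.choose ((a1 + a2 - 1) / 2) (a1 / 2) : ℝ)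
            * (Nat.factorial a1 : ℝ) * (Nat.factorial a2 : ℝ)
        else 0 := by
  rw [md_zero_eq_of_hasSum (hasSum_G1 lam), G1Coeff]
  split_ifs with h
  · obtain ⟨⟨j, rfl⟩, ⟨l, rfl⟩⟩ := h
    rw [show (j + j + (2 * l + 1) + 1) / 2 = j + l + 1 by omega,
      show (j + j + (2 * l + 1) - 1) / 2 = j + l by omega,
      show (j + j) / 2 = j by omega, show (2 * l + 1) / 2 = l by omega, neg_pow (1 / (2 * lam ^ 2))]
    field_simp
    ring
  · rw [mul_zero]

/-- the mixed derivatives of  at the origin, i.e. the quantity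
 of the paper. -/
theorem H1_derivative_formula (lam : ℝ) (hlam : 0 < lam) (a1 a2 : ℕ) :
    md a1 a2 (G1 lam) 0
      = if Even a1 ∧ Odd a2 then
          (-1 / (2 * π)) * (1 / (2 * lam ^ 2)) ^ ((a1 + a2 + 1) / 2)
            * ((-1 : ℝ) ^ ((a1 + a2 - 1) / 2) / (Nat.factorial ((a1 + a2 + 1) / 2) : ℝ))
            * (Nat.choose ((a1 + a2 - 1) / 2) (a1 / 2) : ℝ)
            * (Nat.factorial a1 : ℝ) * (Nat.factorial a2 : ℝ)
        else 0 :=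
  H1_derivative_formula_general lam a1 a2
end
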